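/- For every order ν > 0 and every n ≥ 1, the n-th positive zero j_{ν+1,n} of the Bessel function J_{ν+1} is strictly less than the (n+1)-th positive zero j'_{ν,n+1} of the derivative J'_ν. -/

import Mathlib

/-!
Write `J_μ(x) = (x/2)^μ F_μ(x²/4)` with `F_μ` an entire power series. The identities
`F_μ' = -F_{μ+1}` and `F_μ + t F_{μ+2} = (μ+1) F_{μ+1}` give `J_μ' = (μ/x) J_μ - J_{μ+1}` and
Bessel's equation `(x J_ν')' = (ν²/x - x) J_ν`.

If `a < b` are consecutive zeros of `J_ν'` with `ν ≤ a`, Rolle's theorem for `x J_ν'` produces a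
zero of `J_ν` in `(a, b)`. As `J_ν` is strictly monotone on `[a, b]`, `J_ν a` and `J_ν b` have
opposite signs, hence so have `J_{ν+1} a = (ν/a) J_ν a` and `J_{ν+1} b = (ν/b) J_ν b`, and
`J_{ν+1}` vanishes in between. Since `J_ν` and `J_ν'` are positive near `0`, Bessel's equation
also shows that the first zero of `J_ν'` exceeds `ν`. So every interval `(j'_{ν,m}, j'_{ν,m+1})`
contains a zero of `J_{ν+1}`, and counting these zeros gives `j_{ν+1,n} < j'_{ν,n+1}`.
-/

open Real Filter Topology

/-- Bessel function of the first kind of order `ν` (power-series definition,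
valid for `x > 0`). -/
noncomputable def besselJ (ν x : ℝ) : ℝ :=
  ∑' k : ℕ, ((-1 : ℝ) ^ k / ((k.factorial : ℝ) * Real.Gamma (ν + k + 1))) *
    (x / 2) ^ (2 * (k : ℝ) + ν)

/-- Bessel function of the second kind of order `ν`. -/
noncomputable def besselY (ν x : ℝ) : ℝ :=
  (besselJ ν x * Real.cos (ν * π) - besselJ (-ν) x) / Real.sin (ν * π)

/-- `z` enumerates (0-indexed, in increasing order) all the positive zeros of `f`;
so `z (n-1)` is the `n`-th positive zero. -/
def IsZeroSeq (f : ℝ → ℝ) (z : ℕ → ℝ) : Prop :=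
  StrictMono z ∧ (∀ n, 0 < z n) ∧ (∀ n, f (z n) = 0) ∧
    ∀ x, 0 < x → f x = 0 → ∃ n, z n = x

/-- The Wronskian-type function `W_{Ll}`. -/
noncomputable def WronskianW (L l x : ℝ) : ℝ :=
  π * x / 2 * (besselJ (L + 1/2) x * deriv (besselY (l + 1/2)) x -
    deriv (besselJ (L + 1/2)) x * besselY (l + 1/2) x)

/-- Regular Riccati–Bessel function. -/
noncomputable def riccatiU (ν x : ℝ) : ℝ := Real.sqrt (π * x / 2) * besselJ (ν + 1/2) x

/-- Irregular Riccati–Bessel function. -/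
noncomputable def riccatiV (ν x : ℝ) : ℝ := Real.sqrt (π * x / 2) * besselY (ν + 1/2) x

open Set
open scoped Nat

lemma Real.Gamma_le_Gamma_add_nat {s : ℝ} (hs : 1 ≤ s) (k : ℕ) :
    Real.Gamma s ≤ Real.Gamma (s + k) := by
  induction k with
  | zero => simp
  | succ k ih =>
    have hsk : 1 ≤ s + k := by have := k.cast_nonneg (α := ℝ); linarith
    rw [Nat.cast_succ, ← add_assoc, Real.Gamma_add_one (by linarith)]
    nlinarith [Real.Gamma_pos_of_pos (by linarith : 0 < s + k)]

noncomputable def besselCoeff (μ : ℝ) (k : ℕ) : ℝ :=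
  (-1) ^ k / (k ! * Real.Gamma (μ + k + 1))

noncomputable def besselSeries (μ t : ℝ) : ℝ :=
  ∑' k, besselCoeff μ k * t ^ k

section besselSeries

variable {μ : ℝ}

lemma besselCoeff_zero (μ : ℝ) : besselCoeff μ 0 = (Real.Gamma (μ + 1))⁻¹ := by
  simp [besselCoeff]

lemma abs_besselCoeff_le (hμ : 0 ≤ μ) (k : ℕ) :
    |besselCoeff μ k| ≤ (Real.Gamma (μ + 1))⁻¹ * (k ! : ℝ)⁻¹ := by
  have hΓ := Real.Gamma_le_Gamma_add_nat (by linarith : 1 ≤ μ + 1) k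
  have hΓpos := Real.Gamma_pos_of_pos (by linarith : 0 < μ + 1)
  rw [besselCoeff, abs_div, abs_pow, abs_neg, abs_one, one_pow, one_div, ← mul_inv, mul_comm,
    abs_of_pos (by positivity)]
  gcongr
  rwa [add_right_comm]

lemma summable_abs_besselCoeff_mul_pow (hμ : 0 ≤ μ) (R : ℝ) :
    Summable fun k ↦ |besselCoeff μ k| * |R| ^ k :=
  ((Real.summable_pow_div_factorial |R|).mul_left (Real.Gamma (μ + 1))⁻¹).of_nonneg_of_le
    (fun k ↦ by positivity) fun k ↦ by
      rw [mul_div_assoc', div_eq_mul_inv, mul_right_comm]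
      gcongr
      exact abs_besselCoeff_le hμ k

lemma summable_besselCoeff_mul_pow (hμ : 0 ≤ μ) (t : ℝ) :
    Summable fun k ↦ besselCoeff μ k * t ^ k :=
  .of_norm <| by simpa [abs_mul, abs_pow] using summable_abs_besselCoeff_mul_pow hμ t

lemma succ_mul_besselCoeff_succ (μ : ℝ) (k : ℕ) :
    (k + 1) * besselCoeff μ (k + 1) = -besselCoeff (μ + 1) k := by
  rw [besselCoeff, besselCoeff, Nat.factorial_succ, pow_succ]
  push_cast
  rw [show μ + (k + 1) + 1 = μ + 1 + k + 1 by ring, mul_assoc, mul_div_assoc', mul_comm _ (-1 : ℝ),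
    mul_div_mul_left _ _ (by positivity)]
  ring

lemma add_one_mul_besselCoeff_add_one_succ (hμ : 0 ≤ μ) (k : ℕ) :
    (μ + 1) * besselCoeff (μ + 1) (k + 1) = besselCoeff μ (k + 1) + besselCoeff (μ + 2) k := by
  have hΓ : Real.Gamma (μ + k + 3) = (μ + k + 2) * Real.Gamma (μ + k + 2) := by
    rw [← Real.Gamma_add_one (by positivity)]; ring_nf
  have : 0 < Real.Gamma (μ + k + 2) := Real.Gamma_pos_of_pos (by positivity)
  simp only [besselCoeff, Nat.factorial_succ, pow_succ]
  push_cast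
  rw [show μ + 1 + (k + 1) + 1 = μ + k + 3 by ring, show μ + (k + 1) + 1 = μ + k + 2 by ring,
    show μ + 2 + k + 1 = μ + k + 3 by ring, hΓ]
  field_simp
  ring

lemma add_one_mul_besselCoeff_add_one_zero (hμ : 0 ≤ μ) :
    (μ + 1) * besselCoeff (μ + 1) 0 = besselCoeff μ 0 := by
  have hμ1 : μ + 1 ≠ 0 := by positivity
  rw [besselCoeff_zero, besselCoeff_zero, Real.Gamma_add_one hμ1, mul_inv, ← mul_assoc,
    mul_inv_cancel₀ hμ1, one_mul]

lemma besselSeries_zero (μ : ℝ) : besselSeries μ 0 = (Real.Gamma (μ + 1))⁻¹ := by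
  rw [besselSeries, tsum_eq_single 0 fun k hk ↦ by simp [hk], pow_zero, mul_one, besselCoeff_zero]

lemma hasDerivAt_besselSeries (hμ : 0 ≤ μ) (t : ℝ) :
    HasDerivAt (besselSeries μ) (-besselSeries (μ + 1) t) t := by
  set R := |t| + 1
  have hR : 0 < R := by positivity
  -- the termwise derivatives are the terms of `-besselSeries (μ + 1)`, shifted by one
  have hshift (y : ℝ) (k : ℕ) : besselCoeff μ (k + 1) * ((k + 1 : ℕ) * y ^ (k + 1 - 1)) =
      -(besselCoeff (μ + 1) k * y ^ k) := by
    rw [Nat.add_sub_cancel, ← neg_mul, ← succ_mul_besselCoeff_succ]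
    push_cast
    ring
  have hbound : Summable fun k ↦ |besselCoeff μ k| * (k * R ^ (k - 1)) := by
    refine (summable_nat_add_iff 1).1 ?_
    refine (summable_abs_besselCoeff_mul_pow (by linarith : 0 ≤ μ + 1) R).congr fun k ↦ ?_
    simpa [abs_mul, abs_of_pos hR, abs_of_nonneg (by positivity : (0 : ℝ) ≤ k + 1)] using
      (congrArg abs (hshift R k)).symm
  have hderiv := hasDerivAt_tsum_of_isPreconnected hbound Metric.isOpen_ball
    (convex_ball (0 : ℝ) R).isPreconnected (g := fun k y ↦ besselCoeff μ k * y ^ k)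
    (fun k y _ ↦ (hasDerivAt_pow k y).const_mul (besselCoeff μ k))
    (fun k y hy ↦ by
      rw [Real.norm_eq_abs, abs_mul, abs_mul, abs_pow, Nat.abs_cast]
      gcongr
      exact (by simpa using hy : |y| < R).le)
    (Metric.mem_ball_self hR) (summable_besselCoeff_mul_pow hμ 0)
    (by simp [R] : t ∈ Metric.ball 0 R)
  refine hderiv.congr_deriv ?_
  rw [tsum_eq_zero_add' ?_]
  · simp only [hshift, tsum_neg, besselSeries, CharP.cast_eq_zero, zero_mul, mul_zero, zero_add]
  · simpa only [hshift] using (summable_besselCoeff_mul_pow (by linarith : 0 ≤ μ + 1) t).neg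

lemma continuous_besselSeries (hμ : 0 ≤ μ) : Continuous (besselSeries μ) :=
  continuous_iff_continuousAt.2 fun t ↦ (hasDerivAt_besselSeries hμ t).continuousAt

lemma besselSeries_add_mul_besselSeries_add_two (hμ : 0 ≤ μ) (t : ℝ) :
    besselSeries μ t + t * besselSeries (μ + 2) t = (μ + 1) * besselSeries (μ + 1) t := by
  have hs := summable_besselCoeff_mul_pow hμ t
  have hs1 := summable_besselCoeff_mul_pow (by linarith : 0 ≤ μ + 1) t
  have hs2 := summable_besselCoeff_mul_pow (by linarith : 0 ≤ μ + 2) t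
  rw [besselSeries, besselSeries, besselSeries, ← tsum_mul_left, ← tsum_mul_left,
    tsum_eq_zero_add' ((summable_nat_add_iff 1).2 (hs1.mul_left _)),
    tsum_eq_zero_add' ((summable_nat_add_iff 1).2 hs)]
  have hterm (k : ℕ) : (μ + 1) * (besselCoeff (μ + 1) (k + 1) * t ^ (k + 1)) =
      besselCoeff μ (k + 1) * t ^ (k + 1) + t * (besselCoeff (μ + 2) k * t ^ k) := by
    rw [← mul_assoc, add_one_mul_besselCoeff_add_one_succ hμ]
    ring
  rw [tsum_congr hterm, Summable.tsum_add ((summable_nat_add_iff 1).2 hs) (hs2.mul_left t),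
    ← mul_assoc, add_one_mul_besselCoeff_add_one_zero hμ]
  ring

end besselSeries

section besselJ
variable {μ x : ℝ}

lemma besselJ_eq_rpow_mul_besselSeries (μ : ℝ) (hx : 0 < x) :
    besselJ μ x = (x / 2) ^ μ * besselSeries μ (x ^ 2 / 4) := by
  have hterm (k : ℕ) : (x / 2) ^ (2 * (k : ℝ) + μ) = (x ^ 2 / 4) ^ k * (x / 2) ^ μ := by
    rw [Real.rpow_add (by positivity), mul_comm, Real.rpow_mul_natCast (by positivity)]
    norm_num
    ring
  simp only [besselJ, besselSeries, hterm, ← tsum_mul_left, besselCoeff]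
  exact tsum_congr fun k ↦ by ring

lemma hasDerivAt_besselJ (hμ : 0 ≤ μ) (hx : 0 < x) :
    HasDerivAt (besselJ μ) (μ / x * besselJ μ x - besselJ (μ + 1) x) x := by
  have hx2 : x / 2 ≠ 0 := by positivity
  have hpow := ((hasDerivAt_id' x).div_const 2).rpow_const (p := μ) (Or.inl hx2)
  have hsq : HasDerivAt (fun y ↦ y ^ 2 / 4) (x / 2) x :=
    ((hasDerivAt_pow 2 x).div_const 4).congr_deriv (by norm_num; ring)
  have hser := (hasDerivAt_besselSeries hμ (x ^ 2 / 4)).comp x hsq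
  have heq : (fun y ↦ (y / 2) ^ μ * besselSeries μ (y ^ 2 / 4)) =ᶠ[𝓝 x] besselJ μ := by
    filter_upwards [eventually_gt_nhds hx] with y hy
    exact (besselJ_eq_rpow_mul_besselSeries μ hy).symm
  refine ((hpow.mul hser).congr_of_eventuallyEq heq.symm).congr_deriv ?_
  rw [besselJ_eq_rpow_mul_besselSeries μ hx, besselJ_eq_rpow_mul_besselSeries (μ + 1) hx,
    Real.rpow_sub_one hx2, Real.rpow_add_one hx2]
  simp only [Function.comp_apply]
  field_simp
  ring

lemma besselJ_add_besselJ_add_two (hμ : 0 ≤ μ) (hx : 0 < x) :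
    besselJ μ x + besselJ (μ + 2) x = 2 * (μ + 1) / x * besselJ (μ + 1) x := by
  have hx2 : x / 2 ≠ 0 := by positivity
  have h := besselSeries_add_mul_besselSeries_add_two hμ (x ^ 2 / 4)
  rw [besselJ_eq_rpow_mul_besselSeries μ hx, besselJ_eq_rpow_mul_besselSeries (μ + 1) hx,
    besselJ_eq_rpow_mul_besselSeries (μ + 2) hx, Real.rpow_add_one hx2,
    Real.rpow_add (by positivity), Real.rpow_two]
  field_simp
  linear_combination 4 * h

lemma continuousAt_deriv_besselJ (hμ : 0 ≤ μ) (hx : 0 < x) :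
    ContinuousAt (deriv (besselJ μ)) x := by
  have heq : (fun y ↦ μ / y * besselJ μ y - besselJ (μ + 1) y) =ᶠ[𝓝 x] deriv (besselJ μ) := by
    filter_upwards [eventually_gt_nhds hx] with y hy
    exact (hasDerivAt_besselJ hμ hy).deriv.symm
  refine ContinuousAt.congr ?_ heq
  exact ((continuousAt_const.div continuousAt_id hx.ne').mul
    (hasDerivAt_besselJ hμ hx).continuousAt).sub (hasDerivAt_besselJ (by linarith) hx).continuousAt

/-- Bessel's differential equation. -/
lemma hasDerivAt_mul_deriv_besselJ (hμ : 0 ≤ μ) (hx : 0 < x) :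
    HasDerivAt (fun y ↦ y * deriv (besselJ μ) y) ((μ ^ 2 / x - x) * besselJ μ x) x := by
  have heq : (fun y ↦ μ * besselJ μ y - y * besselJ (μ + 1) y) =ᶠ[𝓝 x]
      fun y ↦ y * deriv (besselJ μ) y := by
    filter_upwards [eventually_gt_nhds hx] with y hy
    rw [(hasDerivAt_besselJ hμ hy).deriv]
    field_simp
  refine ((((hasDerivAt_besselJ hμ hx).const_mul μ).sub ((hasDerivAt_id x).mul
    (hasDerivAt_besselJ (by linarith) hx))).congr_of_eventuallyEq heq.symm).congr_deriv ?_
  have h := besselJ_add_besselJ_add_two hμ hx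
  rw [show μ + 2 = μ + 1 + 1 by ring] at h
  simp only [id]
  field_simp at h ⊢
  linear_combination x * h

end besselJ

lemma eventually_besselJ_pos_and_deriv_pos {ν : ℝ} (hν : 0 < ν) :
    ∀ᶠ x in 𝓝[>] 0, 0 < besselJ ν x ∧ 0 < deriv (besselJ ν) x := by
  have hF := continuous_besselSeries hν.le
  have hF₁ := continuous_besselSeries (by linarith : 0 ≤ ν + 1)
  have hΓ : 0 < (Real.Gamma (ν + 1))⁻¹ := inv_pos.2 (Real.Gamma_pos_of_pos (by linarith))
  -- `J_ν` and `x J_ν'` are `(x/2)^ν` times continuous functions that are positive at `0`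
  have hJ : ∀ᶠ x in 𝓝 0, 0 < besselSeries ν (x ^ 2 / 4) :=
    continuousAt_const.eventually_lt
      (by fun_prop : Continuous fun x ↦ besselSeries ν (x ^ 2 / 4)).continuousAt
      (by simpa [besselSeries_zero] using hΓ)
  have hJ' : ∀ᶠ x in 𝓝 0,
      0 < ν * besselSeries ν (x ^ 2 / 4) - x ^ 2 / 2 * besselSeries (ν + 1) (x ^ 2 / 4) :=
    continuousAt_const.eventually_lt (by fun_prop : Continuous fun x ↦
      ν * besselSeries ν (x ^ 2 / 4) - x ^ 2 / 2 * besselSeries (ν + 1) (x ^ 2 / 4)).continuousAt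
      (by simpa [besselSeries_zero] using mul_pos hν hΓ)
  filter_upwards [nhdsWithin_le_nhds hJ, nhdsWithin_le_nhds hJ', self_mem_nhdsWithin]
    with x hJx hJ'x (hx : 0 < x)
  refine ⟨by rw [besselJ_eq_rpow_mul_besselSeries ν hx]; positivity, ?_⟩
  have hderiv : deriv (besselJ ν) x = (x / 2) ^ ν / x *
      (ν * besselSeries ν (x ^ 2 / 4) - x ^ 2 / 2 * besselSeries (ν + 1) (x ^ 2 / 4)) := by
    rw [(hasDerivAt_besselJ hν.le hx).deriv, besselJ_eq_rpow_mul_besselSeries ν hx,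
      besselJ_eq_rpow_mul_besselSeries (ν + 1) hx, Real.rpow_add_one (by positivity)]
    field_simp
  rw [hderiv]
  positivity

section signChange
variable {f : ℝ → ℝ} {a b c : ℝ}

lemma exists_mem_Ioo_eq_zero_of_mul_neg (hab : a ≤ b) (hf : ContinuousOn f (Icc a b))
    (h : f a * f b < 0) : ∃ c ∈ Ioo a b, f c = 0 := by
  rcases (left_ne_zero_of_mul h.ne).lt_or_gt with ha | ha
  · exact intermediate_value_Ioo hab hf ⟨ha, pos_of_mul_neg_right h ha.le⟩
  · exact intermediate_value_Ioo' hab hf ⟨neg_of_mul_neg_right h ha.le, ha⟩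

lemma mul_neg_of_eq_zero_of_deriv_ne_zero (hf : ContinuousOn f (Icc a b))
    (hdf : ∀ x ∈ Ioo a b, DifferentiableAt ℝ f x) (hf' : ∀ x ∈ Ioo a b, deriv f x ≠ 0)
    (hc : c ∈ Ioo a b) (hfc : f c = 0) : f a * f b < 0 := by
  have ha : a ∈ Icc a b := left_mem_Icc.2 (hc.1.trans hc.2).le
  have hb : b ∈ Icc a b := right_mem_Icc.2 (hc.1.trans hc.2).le
  rcases hasDerivWithinAt_forall_lt_or_forall_gt_of_forall_ne (convex_Ioo a b)
    (fun x hx ↦ (hdf x hx).hasDerivAt.hasDerivWithinAt) hf' with hneg | hpos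
  · have hanti := strictAntiOn_of_deriv_neg (convex_Icc a b) hf (by rwa [interior_Icc])
    have hfa := hanti ha (Ioo_subset_Icc_self hc) hc.1
    have hfb := hanti (Ioo_subset_Icc_self hc) hb hc.2
    rw [hfc] at hfa hfb
    exact mul_neg_of_pos_of_neg hfa hfb
  · have hmono := strictMonoOn_of_deriv_pos (convex_Icc a b) hf (by rwa [interior_Icc])
    have hfa := hmono ha (Ioo_subset_Icc_self hc) hc.1
    have hfb := hmono (Ioo_subset_Icc_self hc) hb hc.2
    rw [hfc] at hfa hfb
    exact mul_neg_of_neg_of_pos hfa hfb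

end signChange

section besselZeros
variable {ν a b : ℝ}

lemma continuousOn_besselJ (hν : 0 ≤ ν) {s : Set ℝ} (hs : ∀ x ∈ s, 0 < x) :
    ContinuousOn (besselJ ν) s :=
  fun x hx ↦ (hasDerivAt_besselJ hν (hs x hx)).continuousAt.continuousWithinAt

lemma continuousOn_mul_deriv_besselJ (hν : 0 ≤ ν) {s : Set ℝ} (hs : ∀ x ∈ s, 0 < x) :
    ContinuousOn (fun x ↦ x * deriv (besselJ ν) x) s :=
  continuousOn_id.mul fun x hx ↦ (continuousAt_deriv_besselJ hν (hs x hx)).continuousWithinAt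

lemma lt_of_deriv_besselJ_eq_zero (hν : 0 < ν) (ha : 0 < a) (hJa : deriv (besselJ ν) a = 0)
    (hne : ∀ x ∈ Ioo 0 a, deriv (besselJ ν) x ≠ 0) : ν < a := by
  by_contra! haν
  obtain ⟨x₀, ⟨hJx₀, hJ'x₀⟩, hx₀⟩ :=
    ((eventually_besselJ_pos_and_deriv_pos hν).and (Ioo_mem_nhdsGT ha)).exists
  have hpos : ∀ x ∈ Icc x₀ a, 0 < x := fun x hx ↦ hx₀.1.trans_le hx.1
  have hsub : interior (Icc x₀ a) ⊆ Ioo 0 a := by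
    rw [interior_Icc]; exact Ioo_subset_Ioo_left hx₀.1.le
  have hJ'pos : ∀ x ∈ Ioo 0 a, 0 < deriv (besselJ ν) x :=
    (hasDerivWithinAt_forall_lt_or_forall_gt_of_forall_ne (convex_Ioo 0 a)
      (fun x hx ↦ (hasDerivAt_besselJ hν.le hx.1).differentiableAt.hasDerivAt.hasDerivWithinAt)
      hne).resolve_left fun h ↦ (h x₀ hx₀).not_gt hJ'x₀
  have hJmono : MonotoneOn (besselJ ν) (Icc x₀ a) :=
    monotoneOn_of_deriv_nonneg (convex_Icc x₀ a) (continuousOn_besselJ hν.le hpos)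
      (fun x hx ↦ (hasDerivAt_besselJ hν.le (hsub hx).1).differentiableAt.differentiableWithinAt)
      fun x hx ↦ (hJ'pos x (hsub hx)).le
  -- on `[x₀, a] ⊆ (0, ν]` Bessel's equation makes `x J_ν'` nondecreasing
  have hmono : MonotoneOn (fun x ↦ x * deriv (besselJ ν) x) (Icc x₀ a) := by
    refine monotoneOn_of_hasDerivWithinAt_nonneg (convex_Icc x₀ a)
      (continuousOn_mul_deriv_besselJ hν.le hpos)
      (fun x hx ↦ (hasDerivAt_mul_deriv_besselJ hν.le (hsub hx).1).hasDerivWithinAt) fun x hx ↦ ?_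
    have hx' := hsub hx
    have hνx : 0 ≤ ν ^ 2 / x - x := by
      have hxν : x < ν := hx'.2.trans_le haν
      rw [sub_nonneg, le_div_iff₀ hx'.1]
      nlinarith [hx'.1]
    exact mul_nonneg hνx (hJx₀.trans_le (hJmono (left_mem_Icc.2 hx₀.2.le)
      (interior_subset hx) (interior_subset hx).1)).le
  have := hmono (left_mem_Icc.2 hx₀.2.le) (right_mem_Icc.2 hx₀.2.le) hx₀.2.le
  simp only [hJa, mul_zero] at this
  exact (mul_pos hx₀.1 hJ'x₀).not_ge this

lemma exists_besselJ_add_one_eq_zero_mem_Ioo (hν : 0 < ν) (hνa : ν ≤ a) (hab : a < b)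
    (hJa : deriv (besselJ ν) a = 0) (hJb : deriv (besselJ ν) b = 0)
    (hne : ∀ x ∈ Ioo a b, deriv (besselJ ν) x ≠ 0) : ∃ c ∈ Ioo a b, besselJ (ν + 1) c = 0 := by
  have ha : 0 < a := hν.trans_le hνa
  have hpos : ∀ x ∈ Icc a b, 0 < x := fun x hx ↦ ha.trans_le hx.1
  -- Rolle for `x J_ν'` gives `(ν² / c - c) J_ν c = 0` with `c > ν`
  obtain ⟨c, hc, hc'⟩ := exists_hasDerivAt_eq_zero hab (continuousOn_mul_deriv_besselJ hν.le hpos)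
    (by simp only [hJa, hJb, mul_zero])
    fun x hx ↦ hasDerivAt_mul_deriv_besselJ hν.le (hpos x (Ioo_subset_Icc_self hx))
  have hνc : ν ^ 2 / c - c ≠ 0 := by
    have hc0 := hpos c (Ioo_subset_Icc_self hc)
    rw [sub_ne_zero, ne_eq, div_eq_iff hc0.ne']
    nlinarith [hνa.trans_lt hc.1]
  have hsign := mul_neg_of_eq_zero_of_deriv_ne_zero (continuousOn_besselJ hν.le hpos)
    (fun x hx ↦ (hasDerivAt_besselJ hν.le (hpos x (Ioo_subset_Icc_self hx))).differentiableAt)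
    hne hc ((mul_eq_zero.1 hc').resolve_left hνc)
  have hrec (x : ℝ) (hx : 0 < x) (hJx : deriv (besselJ ν) x = 0) :
      besselJ (ν + 1) x = ν / x * besselJ ν x := by
    rw [(hasDerivAt_besselJ hν.le hx).deriv] at hJx
    linarith
  refine exists_mem_Ioo_eq_zero_of_mul_neg hab.le (continuousOn_besselJ (by linarith) hpos) ?_
  rw [hrec a ha hJa, hrec b (ha.trans hab) hJb, mul_mul_mul_comm]
  exact mul_neg_of_pos_of_neg (mul_pos (div_pos hν ha) (div_pos hν (ha.trans hab))) hsign

end besselZeros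

namespace IsZeroSeq
variable {f : ℝ → ℝ} {z : ℕ → ℝ}

lemma strictMono (hz : IsZeroSeq f z) : StrictMono z := hz.1

lemma pos (hz : IsZeroSeq f z) (n : ℕ) : 0 < z n := hz.2.1 n

lemma apply_eq_zero (hz : IsZeroSeq f z) (n : ℕ) : f (z n) = 0 := hz.2.2.1 n

lemma exists_eq_of_eq_zero (hz : IsZeroSeq f z) {x : ℝ} (hx : 0 < x) (hfx : f x = 0) :
    ∃ n, z n = x :=
  hz.2.2.2 x hx hfx

lemma ne_zero_of_mem_Ioo_zero (hz : IsZeroSeq f z) {x : ℝ} (hx : x ∈ Ioo 0 (z 0)) : f x ≠ 0 := by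
  intro hfx
  obtain ⟨k, rfl⟩ := hz.exists_eq_of_eq_zero hx.1 hfx
  exact (hz.strictMono.monotone k.zero_le).not_gt hx.2

lemma ne_zero_of_mem_Ioo (hz : IsZeroSeq f z) {m : ℕ} {x : ℝ} (hx : x ∈ Ioo (z m) (z (m + 1))) :
    f x ≠ 0 := by
  intro hfx
  obtain ⟨k, rfl⟩ := hz.exists_eq_of_eq_zero ((hz.pos m).trans hx.1) hfx
  have h₁ := hz.strictMono.lt_iff_lt.1 hx.1
  have h₂ := hz.strictMono.lt_iff_lt.1 hx.2
  omega

lemma lt_of_forall_exists_zero_mem_Ioo (hz : IsZeroSeq f z) {w : ℕ → ℝ} (hw : ∀ m, 0 ≤ w m)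
    (h : ∀ m, ∃ c ∈ Ioo (w m) (w (m + 1)), f c = 0) (n : ℕ) : z n < w (n + 1) := by
  choose c hc hfc using h
  choose k hk using fun m ↦ hz.exists_eq_of_eq_zero ((hw m).trans_lt (hc m).1) (hfc m)
  have hc_mono : StrictMono c := strictMono_nat_of_lt_succ fun m ↦ (hc m).2.trans (hc (m + 1)).1
  have hk_mono : StrictMono k := fun m m' hmm' ↦
    hz.strictMono.lt_iff_lt.1 (by rw [hk, hk]; exact hc_mono hmm')
  calc z n ≤ z (k n) := hz.strictMono.monotone hk_mono.le_apply
    _ = c n := hk n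
    _ < w (n + 1) := (hc n).2

end IsZeroSeq

/-- For `ν > 0` and `n ≥ 1`, the `n`-th positive zero of `J_{ν+1}` is strictly
less than the `(n+1)`-th positive zero of `J'_ν`.  (0-indexed sequences.) -/
theorem besselJ_succ_zero_lt_deriv_zero (ν : ℝ) (hν : 0 < ν)
    (jp j' : ℕ → ℝ)
    (hjp : IsZeroSeq (besselJ (ν + 1)) jp)
    (hj' : IsZeroSeq (deriv (besselJ ν)) j') :
    ∀ n : ℕ, jp n < j' (n + 1) := by
  have hν₀ : ν < j' 0 := lt_of_deriv_besselJ_eq_zero hν (hj'.pos 0) (hj'.apply_eq_zero 0)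
    fun x hx ↦ hj'.ne_zero_of_mem_Ioo_zero hx
  refine hjp.lt_of_forall_exists_zero_mem_Ioo (fun m ↦ (hj'.pos m).le) fun m ↦ ?_
  exact exists_besselJ_add_one_eq_zero_mem_Ioo hν (hν₀.le.trans (hj'.strictMono.monotone m.zero_le))
    (hj'.strictMono m.lt_succ_self) (hj'.apply_eq_zero m) (hj'.apply_eq_zero (m + 1))
    fun x hx ↦ hj'.ne_zero_of_mem_Ioo hx
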